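/- arXiv:2212.13418 — 6 statements merged into one kernel-verified Lean document; each statement's English description precedes it below -/
import Mathlib

section
/- For real numbers a, b with ab > 0, a ≠ b, and odd integer n ≥ 3, one has |a^(n-2)/(a^n - b^n)| < |1/((a-b)(a+b))|. -/
open Finset in
private lemma key_sum (a b : ℝ) (n : ℕ) (hn3 : 3 ≤ n) (ha : 0 < a) (hb : 0 < b) :
    a ^ (n - 2) * (a + b) < ∑ i ∈ Finset.range n, a ^ i * b ^ (n - 1 - i) := by
  have h1 : n - 1 ∈ Finset.range n := by
    simp [Finset.mem_range]; omega
  have h2 : n - 2 ≠ n - 1 := by omega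
  have hsub : ({n - 2, n - 1} : Finset ℕ) ⊆ Finset.range n := by
    intro x hx
    simp only [Finset.mem_insert, Finset.mem_singleton] at hx
    rcases hx with rfl | rfl <;> simp [Finset.mem_range] <;> omega
  have h0 : (0 : ℕ) ∈ Finset.range n := by simp [Finset.mem_range]; omega
  have h0t : (0 : ℕ) ∉ ({n - 2, n - 1} : Finset ℕ) := by
    simp only [Finset.mem_insert, Finset.mem_singleton]
    omega
  have hlt : ∑ i ∈ ({n - 2, n - 1} : Finset ℕ), a ^ i * b ^ (n - 1 - i)
      < ∑ i ∈ Finset.range n, a ^ i * b ^ (n - 1 - i) := by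
    apply Finset.sum_lt_sum_of_subset hsub h0 h0t
    · positivity
    · intro j _ _; positivity
  have hpair : ∑ i ∈ ({n - 2, n - 1} : Finset ℕ), a ^ i * b ^ (n - 1 - i)
      = a ^ (n - 2) * b ^ (n - 1 - (n - 2)) + a ^ (n - 1) * b ^ (n - 1 - (n - 1)) :=
    Finset.sum_pair h2
  have e1 : n - 1 - (n - 2) = 1 := by omega
  have e2 : n - 1 - (n - 1) = 0 := by omega
  have e3 : n - 1 = (n - 2) + 1 := by omega
  rw [hpair, e1, e2] at hlt
  calc a ^ (n - 2) * (a + b)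
      = a ^ (n - 2) * b ^ 1 + a ^ (n - 1) * b ^ 0 := by
        rw [e3]; ring
    _ < _ := hlt

private lemma main_pos (a b : ℝ) (n : ℕ) (hn : Odd n) (hn3 : 3 ≤ n)
    (ha : 0 < a) (hb : 0 < b) (hne : a ≠ b) :
    |a ^ (n - 2) / (a ^ n - b ^ n)| < |1 / ((a - b) * (a + b))| := by
  set S := ∑ i ∈ Finset.range n, a ^ i * b ^ (n - 1 - i) with hSdef
  have hgeom : S * (a - b) = a ^ n - b ^ n := geom_sum₂_mul a b n
  have hSpos : 0 < S := by
    apply Finset.sum_pos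
    · intro i _; positivity
    · exact ⟨0, by simp [Finset.mem_range]; omega⟩
  have habne : a - b ≠ 0 := sub_ne_zero.mpr hne
  have habsab : (0:ℝ) < |a - b| := abs_pos.mpr habne
  have hkey := key_sum a b n hn3 ha hb
  have hdpos : (0:ℝ) < |a ^ n - b ^ n| := by
    rw [← hgeom, abs_mul, abs_of_pos hSpos]
    positivity
  have hdpos2 : (0:ℝ) < |(a - b) * (a + b)| := by
    rw [abs_mul]
    have : 0 < a + b := by linarith
    rw [abs_of_pos this]
    positivity
  rw [abs_div, abs_div, abs_one, div_lt_div_iff₀ hdpos hdpos2, ← hgeom,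
    abs_mul S, abs_of_pos hSpos, abs_mul (a - b),
    abs_of_pos (show (0:ℝ) < a + b by linarith),
    abs_of_pos (show (0:ℝ) < a ^ (n-2) by positivity)]
  calc a ^ (n - 2) * (|a - b| * (a + b)) = (a ^ (n-2) * (a + b)) * |a - b| := by ring
    _ < S * |a - b| := by
        apply mul_lt_mul_of_pos_right hkey habsab
    _ = 1 * (S * |a - b|) := by ring

theorem stmt_0 (a b : ℝ) (n : ℕ) (hn : Odd n) (hn3 : 3 ≤ n)
    (hab : a * b > 0) (hne : a ≠ b) :
    |a ^ (n - 2) / (a ^ n - b ^ n)| < |1 / ((a - b) * (a + b))| := by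
  rcases mul_pos_iff.mp hab with ⟨ha, hb⟩ | ⟨ha, hb⟩
  · exact main_pos a b n hn hn3 ha hb hne
  · have hn2 : Odd (n - 2) := by
      rcases hn with ⟨k, hk⟩
      exact ⟨k - 1, by omega⟩
    have h := main_pos (-a) (-b) n hn hn3 (by linarith) (by linarith)
      (by intro h; apply hne; linarith [neg_injective h])
    have e1 : (-a : ℝ) ^ n = -(a ^ n) := hn.neg_pow a
    have e2 : (-b : ℝ) ^ n = -(b ^ n) := hn.neg_pow b
    have e3 : (-a : ℝ) ^ (n - 2) = -(a ^ (n - 2)) := hn2.neg_pow a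
    rw [e1, e2, e3] at h
    have e4 : -(a ^ n) - -(b ^ n) = -(a ^ n - b ^ n) := by ring
    have e5 : (-a - -b) * (-a + -b) = (a - b) * (a + b) := by ring
    rw [e4, e5, neg_div_neg_eq] at h
    exact h
end

section
/- For an odd integer n ≥ 3, the function f(t) = (7/10)(2+t)^n - t^n - 1/5 is strictly positive for all t ∈ (-1, 1]. -/
theorem stmt_7 (n : ℕ) (hn : Odd n) (hn3 : 3 ≤ n) :
    ∀ t ∈ Set.Ioc (-1 : ℝ) 1, (7 / 10) * (2 + t) ^ n - t ^ n - 1 / 5 > 0 := by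
  rintro t ⟨ht1, ht2⟩
  rcases le_or_gt t 0 with h | h
  · have htn : t ^ n ≤ 0 := hn.pow_nonpos h
    have hb : (1 : ℝ) ≤ 2 + t := by linarith
    have h1 : (1 : ℝ) ≤ (2 + t) ^ n := one_le_pow₀ hb
    nlinarith
  · have htn : t ^ n ≤ 1 := pow_le_one₀ h.le ht2
    have h8 : (8 : ℝ) ≤ (2 + t) ^ n := by
      calc (8 : ℝ) = 2 ^ 3 := by norm_num
      _ ≤ (2 : ℝ) ^ n := pow_le_pow_right₀ (by norm_num) hn3
      _ ≤ (2 + t) ^ n := pow_le_pow_left₀ (by norm_num) (by linarith) n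
    nlinarith
end

section
/- Let n ≥ 3 be an odd integer, M > 0, and δ_k(t) = (3/2) π^(n-2) M |2k + t|^(n-2). If k is an integer with k ≥ π^(-2) M + 1 and t ∈ (-1, 1], then (2πk + 2π + πt)^n - (2πk + πt)^n > δ_k(t) + δ_{k+1}(t). -/
theorem stmt_8 (n : ℕ) (hn : Odd n) (hn3 : 3 ≤ n) (M : ℝ) (hM : 0 < M)
    (k : ℤ) (hk : (Real.pi ^ 2)⁻¹ * M + 1 ≤ (k : ℝ))
    (t : ℝ) (ht : t ∈ Set.Ioc (-1 : ℝ) 1)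
    (δ : ℤ → ℝ → ℝ)
    (hδ : ∀ j : ℤ, ∀ s : ℝ,
      δ j s = (3 / 2) * Real.pi ^ (n - 2) * M * |2 * (j : ℝ) + s| ^ (n - 2)) :
    (2 * Real.pi * k + 2 * Real.pi + Real.pi * t) ^ n -
      (2 * Real.pi * k + Real.pi * t) ^ n > δ k t + δ (k + 1) t := by
  obtain ⟨ht1, ht2⟩ := ht
  have p := Real.pi_pos
  have hp2 : (0:ℝ) < Real.pi ^ 2 := by positivity
  set x : ℝ := 2 * (k:ℝ) + t with hxdef
  have hk1 : (1:ℝ) ≤ (k:ℝ) := by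
    have : 0 < (Real.pi ^ 2)⁻¹ * M := by positivity
    linarith
  have hxpos : 0 < x := by simp only [hxdef]; linarith
  have hx2pos : 0 < x + 2 := by linarith
  have hn1 : n - 1 + 1 = n := by omega
  have hn2 : n - 2 + 1 = n - 1 := by omega
  have hA : 0 < Real.pi ^ (n-2) := pow_pos p _
  have hB : 0 < (x+2) ^ (n-2) := pow_pos hx2pos _
  have hmono : x ^ (n-1) ≤ (x+2) ^ (n-1) := pow_le_pow_left₀ hxpos.le (by linarith) _
  have hmono2 : x ^ (n-2) ≤ (x+2) ^ (n-2) := pow_le_pow_left₀ hxpos.le (by linarith) _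
  have hxn : x ^ n = x * x ^ (n-1) := by
    conv_lhs => rw [← hn1, pow_succ']
  have hxn2 : (x+2) ^ n = (x+2) * (x+2) ^ (n-1) := by
    conv_lhs => rw [← hn1, pow_succ']
  have hx2n : (x+2) ^ (n-1) = (x+2) * (x+2) ^ (n-2) := by
    conv_lhs => rw [← hn2, pow_succ']
  have hpin : Real.pi ^ n = Real.pi ^ (n-2) * Real.pi ^ 2 := by
    rw [← pow_add]; congr 1; omega
  have hdiff : (x+2)^n - x^n ≥ 2 * (x+2)^(n-1) := by
    nlinarith [mul_le_mul_of_nonneg_left hmono hxpos.le]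
  have hMk : M ≤ Real.pi ^ 2 * ((k:ℝ) - 1) := by
    have h2 : (Real.pi ^ 2)⁻¹ * M ≤ (k:ℝ) - 1 := by linarith
    calc M = Real.pi ^ 2 * ((Real.pi ^ 2)⁻¹ * M) := by field_simp
    _ ≤ Real.pi ^ 2 * ((k:ℝ) - 1) := by
        exact mul_le_mul_of_nonneg_left h2 hp2.le
  have key : 3 * M < 2 * Real.pi ^ 2 * (x + 2) := by
    have h7 : 0 < (k:ℝ) + 2*t + 7 := by linarith
    nlinarith [mul_pos hp2 h7]
  have e1 : 2 * Real.pi * (k:ℝ) + Real.pi * t = Real.pi * x := by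
    simp only [hxdef]; ring
  have e2 : 2 * Real.pi * (k:ℝ) + 2 * Real.pi + Real.pi * t = Real.pi * (x+2) := by
    simp only [hxdef]; ring
  have eabs1 : |2 * (k:ℝ) + t| = x := abs_of_pos hxpos
  have eabs2 : |2 * ((k:ℝ)+1) + t| = x + 2 := by
    rw [show 2 * ((k:ℝ)+1) + t = x + 2 by simp only [hxdef]; ring]
    exact abs_of_pos hx2pos
  rw [hδ, hδ, e1, e2, eabs1, Int.cast_add, Int.cast_one, eabs2,
    mul_pow, mul_pow]
  have hd2 : Real.pi ^ n * ((x+2)^n - x^n) ≥ Real.pi ^ n * (2 * (x+2)^(n-1)) :=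
    mul_le_mul_of_nonneg_left hdiff (pow_pos p n).le
  have hkey2 : Real.pi ^ n * (2 * (x+2)^(n-1))
      > 3 * Real.pi ^ (n-2) * M * (x+2)^(n-2) := by
    rw [hpin, hx2n]
    nlinarith [mul_pos hA hB, mul_lt_mul_of_pos_left key (mul_pos hA hB)]
  have hd2' := hd2
  rw [mul_sub] at hd2'
  have hRHS : (3/2 * Real.pi ^ (n-2) * M) * x ^ (n-2) ≤ (3/2 * Real.pi ^ (n-2) * M) * (x+2) ^ (n-2) :=
    mul_le_mul_of_nonneg_left hmono2 (by positivity)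
  linarith [hd2', hkey2, hRHS]
end

section
/- Let n ≥ 3 be odd and M > 0 with k ≥ π^(-2)M + 1 an integer and t ∈ (-1,1]. Then the interval B(k,t) = ((2πk+πt)^n − δ_k(t), (2πk+πt)^n + δ_k(t)), with δ_k(t) = (3/2)π^(n-2)M|2k+t|^(n-2), is contained in the interval I(k,t) = [(2πk+πt−π)^n, (2πk+πt+π)^n). -/
set_option maxHeartbeats 1000000 in
theorem stmt_9 (n : ℕ) (hn : Odd n) (hn3 : 3 ≤ n) (M : ℝ) (hM : 0 < M)
    (k : ℤ) (hk : (Real.pi ^ 2)⁻¹ * M + 1 ≤ (k : ℝ))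
    (t : ℝ) (ht : t ∈ Set.Ioc (-1 : ℝ) 1) :
    Set.Ioo
        ((2 * Real.pi * k + Real.pi * t) ^ n -
          (3 / 2) * Real.pi ^ (n - 2) * M * |2 * (k : ℝ) + t| ^ (n - 2))
        ((2 * Real.pi * k + Real.pi * t) ^ n +
          (3 / 2) * Real.pi ^ (n - 2) * M * |2 * (k : ℝ) + t| ^ (n - 2)) ⊆
      Set.Ico ((2 * Real.pi * k + Real.pi * t - Real.pi) ^ n)
        ((2 * Real.pi * k + Real.pi * t + Real.pi) ^ n) := by
  obtain ⟨ht1, ht2⟩ := ht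
  have hπ := Real.pi_pos
  have hπ2 : (0:ℝ) < Real.pi ^ 2 := by positivity
  have hinv : Real.pi ^ 2 * (Real.pi ^ 2)⁻¹ = 1 := mul_inv_cancel₀ (ne_of_gt hπ2)
  have hπk : M + Real.pi ^ 2 ≤ Real.pi ^ 2 * k := by
    nlinarith [mul_le_mul_of_nonneg_left hk hπ2.le]
  set a : ℝ := 2 * (k:ℝ) + t with ha
  have ha1 : 1 ≤ a := by nlinarith
  have haM : 3 / 2 * M ≤ Real.pi ^ 2 * a := by nlinarith
  have habs : |2 * (k:ℝ) + t| = a := abs_of_nonneg (by linarith)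
  have hx : 2 * Real.pi * k + Real.pi * t = Real.pi * a := by rw [ha]; ring
  rw [habs, hx]
  set p := Real.pi with hp
  have h2 : p ^ n = p ^ (n-2) * p ^ 2 := by rw [← pow_add]; congr 1; omega
  have ha0 : (0:ℝ) ≤ a := by linarith
  have hpowa : a ^ n = a ^ (n-2) * a * a := by
    rw [← pow_succ, ← pow_succ]; congr 1; omega
  have hpow1 : a ^ (n-1) = a ^ (n-2) * a := by rw [← pow_succ]; congr 1; omega
  -- δ ≤ p^n * a^(n-1)
  have hδ : 3 / 2 * p ^ (n - 2) * M * a ^ (n - 2) ≤ p ^ n * a ^ (n-1) := by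
    rw [h2, hpow1]
    have hpa : (0:ℝ) ≤ p ^ (n-2) * a ^ (n-2) := by positivity
    nlinarith [hpa, haM]
  -- (a+1)^n ≥ a^n + a^(n-1)
  have hup' : a ^ n + a ^ (n-1) ≤ (a + 1) ^ n := by
    have h1 : (a + 1) ^ n = (a + 1) * (a + 1) ^ (n-1) := by
      rw [← pow_succ']; congr 1; omega
    have h2' : a ^ (n-1) ≤ (a + 1) ^ (n-1) := by
      apply pow_le_pow_left₀ ha0; linarith
    have h3 : a ^ n = a * a ^ (n-1) := by rw [← pow_succ']; congr 1; omega
    have h4 : (0:ℝ) ≤ a ^ (n-1) := by positivity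
    nlinarith [h2', h4]
  -- (a-1)^n ≤ a^n - a^(n-1)
  have hlo' : (a - 1) ^ n ≤ a ^ n - a ^ (n-1) := by
    have h1 : (a - 1) ^ n = (a - 1) * (a - 1) ^ (n-1) := by
      rw [← pow_succ']; congr 1; omega
    have h2' : (a - 1) ^ (n-1) ≤ a ^ (n-1) := by
      apply pow_le_pow_left₀ (by linarith); linarith
    have h3 : a ^ n = a * a ^ (n-1) := by rw [← pow_succ']; congr 1; omega
    have h5 : (0:ℝ) ≤ (a-1) ^ (n-1) := pow_nonneg (by linarith) _
    nlinarith [h2', h5]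
  have hupfull : (p * a) ^ n + 3 / 2 * p ^ (n - 2) * M * a ^ (n - 2) ≤ (p * a + p) ^ n := by
    have e1 : (p * a + p) ^ n = p ^ n * (a + 1) ^ n := by
      rw [← mul_pow]; ring_nf
    have e2 : (p * a) ^ n = p ^ n * a ^ n := mul_pow p a n
    rw [e1, e2]
    have hpn : (0:ℝ) ≤ p ^ n := by positivity
    have h := mul_le_mul_of_nonneg_left hup' hpn
    rw [mul_add] at h
    linarith
  have hlofull : (p * a - p) ^ n ≤ (p * a) ^ n - 3 / 2 * p ^ (n - 2) * M * a ^ (n - 2) := by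
    have e1 : (p * a - p) ^ n = p ^ n * (a - 1) ^ n := by
      rw [← mul_pow]; ring_nf
    have e2 : (p * a) ^ n = p ^ n * a ^ n := mul_pow p a n
    rw [e1, e2]
    have hpn : (0:ℝ) ≤ p ^ n := by positivity
    have h := mul_le_mul_of_nonneg_left hlo' hpn
    rw [mul_sub] at h
    linarith
  intro y hy
  obtain ⟨hy1, hy2⟩ := hy
  exact ⟨by linarith, by linarith⟩
end

section
/- For an odd integer n ≥ 3 and reals a > b > 0, one has a^n - b^n > (a - b) a^(n-2) (a + b). -/
theorem stmt_10 (n : ℕ) (hn : Odd n) (hn3 : 3 ≤ n) (a b : ℝ)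
    (hb : 0 < b) (hab : b < a) :
    a ^ n - b ^ n > (a - b) * a ^ (n - 2) * (a + b) := by
  clear hn
  have ha : 0 < a := hb.trans hab
  induction n, hn3 using Nat.le_induction with
  | base =>
    norm_num
    nlinarith [mul_pos (sub_pos.mpr hab) (mul_pos hb hb)]
  | succ n hn ih =>
    have h1 : n + 1 - 2 = (n - 2) + 1 := by omega
    have h2 : a ^ (n + 1 - 2) = a ^ (n - 2) * a := by rw [h1, pow_succ]
    have h3 : a ^ (n + 1) = a * a ^ n := by rw [pow_succ]; ring
    have h4 : b ^ (n + 1) = b * b ^ n := by rw [pow_succ]; ring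
    have hbn : 0 < b ^ n := pow_pos hb n
    rw [h2, h3, h4]
    nlinarith [mul_lt_mul_of_pos_left ih ha, mul_pos hbn (sub_pos.mpr hab)]
end

section
/- Let n ≥ 3 be odd, k ≥ 2 an integer, t ∈ (-1,1], and p an integer with -k < p < 0. Then |2p + t|^(n-2) / ((2k-1+t)^n - (2p+t)^n) < 1/(2k-2)², where the denominator is positive. -/
theorem stmt_15 (n : ℕ) (hn : Odd n) (hn3 : 3 ≤ n) (k : ℤ) (hk : 2 ≤ k)
    (t : ℝ) (ht : t ∈ Set.Ioc (-1 : ℝ) 1) (p : ℤ) (hp1 : -k < p) (hp2 : p < 0) :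
    0 < (2 * (k : ℝ) - 1 + t) ^ n - (2 * (p : ℝ) + t) ^ n ∧
      |2 * (p : ℝ) + t| ^ (n - 2) /
          ((2 * (k : ℝ) - 1 + t) ^ n - (2 * (p : ℝ) + t) ^ n) <
        1 / (2 * (k : ℝ) - 2) ^ 2 := by
  obtain ⟨ht1, ht2⟩ := ht
  have hk' : (2:ℝ) ≤ (k:ℝ) := by exact_mod_cast hk
  have hp1' : (-(k:ℝ)) < p := by exact_mod_cast hp1
  have hp2' : (p:ℝ) ≤ -1 := by
    have : p ≤ -1 := by omega
    exact_mod_cast this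
  set a := 2*(k:ℝ)-1+t with hadef
  set b := 2*(p:ℝ)+t with hbdef
  have ha : 2*(k:ℝ)-2 < a := by rw [hadef]; linarith
  have ha0 : (0:ℝ) < 2*(k:ℝ)-2 := by linarith
  have hb : b < 0 := by rw [hbdef]; linarith
  have hbn : b^n < 0 := Odd.pow_neg hn hb
  have hD : 0 < a^n - b^n := by
    have : 0 < a^n := pow_pos (by linarith) n
    linarith
  refine ⟨hD, ?_⟩
  have hbn' : a^n - b^n = a^n + |b|^n := by
    rw [abs_of_neg hb, Odd.neg_pow hn]; ring
  have hsplit : |b|^(n-2) * |b|^2 = |b|^n := by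
    rw [← pow_add]; congr 1; omega
  have key : |b|^(n-2) * (2*(k:ℝ)-2)^2 < a^n - b^n := by
    rw [hbn']
    rcases le_or_gt (|b|) (2*(k:ℝ)-2) with h | h
    · have h1 : |b|^(n-2) * (2*(k:ℝ)-2)^2 ≤ (2*(k:ℝ)-2)^(n-2) * (2*(k:ℝ)-2)^2 := by
        gcongr
      have h2 : (2*(k:ℝ)-2)^(n-2) * (2*(k:ℝ)-2)^2 = (2*(k:ℝ)-2)^n := by
        rw [← pow_add]; congr 1; omega
      have h3 : (2*(k:ℝ)-2)^n < a^n := by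
        gcongr
      have h4 : 0 ≤ |b|^n := pow_nonneg (abs_nonneg b) n
      linarith
    · have hb0 : 0 < |b| := lt_trans ha0 h
      have h1 : |b|^(n-2) * (2*(k:ℝ)-2)^2 < |b|^(n-2) * |b|^2 := by
        have hp' : 0 < |b|^(n-2) := pow_pos hb0 (n-2)
        have : (2*(k:ℝ)-2)^2 < |b|^2 := by gcongr
        nlinarith
      have h5 : 0 < a^n := pow_pos (by linarith) n
      rw [hsplit] at h1
      linarith
  rw [div_lt_div_iff₀ hD (pow_pos ha0 2)]
  linarith
end
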